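/- Let m ≥ 1, r > 0, and let X, X' ∈ ℝ^m with ‖X' − X‖₂ ≤ r. Let x, x' ∈ ℝ^m, M ∈ ℝ^{m×m}, c ∈ ℝ^m, and fix an index j ∈ {1,…,m}. Set a = ∑_{i=1}^m M_{i,j} x_i + c_j and a' = ∑_{i=1}^m M_{i,j} x'_i + c_j. Suppose there are flags P : {1,…,m} → {0,1}, a matrix L ∈ ℝ^{m×m} with rows L_i, a vector d ∈ ℝ^m, and nonnegative bounds U ∈ ℝ^m such that: (i) for every i with P_i = 0, x_i = ∑_{l=1}^m L_{i,l} X_l + d_i and x'_i = ∑_{l=1}^m L_{i,l} X'_l + d_i; (ii) for every i, |x'_i − x_i| ≤ U_i. If a < 0, then max(a', 0) ≤ max(a + ∑_{i : P_i = 1} |M_{i,j}| · U_i + r · ‖∑_{i : P_i = 0} M_{i,j} · L_i‖₂, 0). -/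

import Mathlib

open Finset

/-!
The change of the pre-activation is `a' - a = ∑ i, M i j * (x' i - x i)`. Split it by the flags.
An active neuron (`P i = 1`) contributes at most `|M i j| * U i`. A stable neuron (`P i = 0`) is
an affine function of the input, so `x' i - x i = ⟪L i, X' - X⟫`, and these terms sum to
`⟪∑ M i j • L i, X' - X⟫`, which Cauchy–Schwarz bounds by `r * ‖∑ M i j • L i‖`. Hence `a'` is
at most the shifted bound, and `max · 0` is monotone.
-/

lemma sum_mul_le_sum_abs_mul {ι : Type*} (s : Finset ι) (w y U : ι → ℝ)
    (hy : ∀ i ∈ s, |y i| ≤ U i) :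
    ∑ i ∈ s, w i * y i ≤ ∑ i ∈ s, |w i| * U i :=
  sum_le_sum fun i hi =>
    calc w i * y i ≤ |w i * y i| := le_abs_self _
      _ = |w i| * |y i| := abs_mul _ _
      _ ≤ |w i| * U i := mul_le_mul_of_nonneg_left (hy i hi) (abs_nonneg _)

lemma sum_mul_inner_le_norm_sum_smul_mul_norm {ι E : Type*} [NormedAddCommGroup E]
    [InnerProductSpace ℝ E] (s : Finset ι) (w : ι → ℝ) (L : ι → E) (δ : E) :
    ∑ i ∈ s, w i * inner ℝ (L i) δ ≤ ‖∑ i ∈ s, w i • L i‖ * ‖δ‖ := by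
  calc ∑ i ∈ s, w i * inner ℝ (L i) δ = inner ℝ (∑ i ∈ s, w i • L i) δ := by
        simp only [sum_inner, real_inner_smul_left]
    _ ≤ ‖∑ i ∈ s, w i • L i‖ * ‖δ‖ := real_inner_le_norm _ _

lemma affine_sub_affine_eq_inner {n : Type*} [Fintype n] (L X X' : EuclideanSpace ℝ n) (d : ℝ) :
    ((∑ l, L l * X' l) + d) - ((∑ l, L l * X l) + d) = inner ℝ L (X' - X) := by
  simp only [PiLp.inner_apply, RCLike.inner_apply, conj_trivial, PiLp.sub_apply, sub_mul,
    sum_sub_distrib, mul_comm (L _)]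
  ring

lemma sum_eq_sum_filter_eq_one_add_sum_filter_eq_zero {ι M : Type*} [Fintype ι]
    [AddCommMonoid M] (P : ι → ℕ) (hP : ∀ i, P i = 0 ∨ P i = 1) (f : ι → M) :
    ∑ i, f i = (∑ i ∈ univ.filter (fun i => P i = 1), f i) +
      ∑ i ∈ univ.filter (fun i => P i = 0), f i := by
  rw [← sum_filter_add_sum_filter_not univ (fun i => P i = 1)]
  congr 2
  exact filter_congr fun i _ => by rcases hP i with h | h <;> simp [h]

theorem postactivation_bound_inactive_case_general
    (m : ℕ) (r : ℝ)
    (X X' : EuclideanSpace ℝ (Fin m)) (hXX' : ‖X' - X‖ ≤ r)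
    (x x' : Fin m → ℝ) (M : Matrix (Fin m) (Fin m) ℝ) (c : Fin m → ℝ) (j : Fin m)
    (P : Fin m → ℕ) (hP : ∀ i, P i = 0 ∨ P i = 1)
    (L : Fin m → EuclideanSpace ℝ (Fin m)) (d : Fin m → ℝ)
    (U : Fin m → ℝ)
    (a a' : ℝ)
    (ha : a = (∑ i, M i j * x i) + c j)
    (ha' : a' = (∑ i, M i j * x' i) + c j)
    (haff : ∀ i, P i = 0 →
      x i = (∑ l, L i l * X l) + d i ∧ x' i = (∑ l, L i l * X' l) + d i)
    (hUb : ∀ i, |x' i - x i| ≤ U i) :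
    max a' 0 ≤
      max (a + ((∑ i ∈ Finset.univ.filter (fun i => P i = 1), |M i j| * U i) +
        r * ‖∑ i ∈ Finset.univ.filter (fun i => P i = 0), M i j • L i‖)) 0 := by
  refine max_le_max_right 0 ?_
  have hdiff : a' - a = ∑ i, M i j * (x' i - x i) := by
    simp only [ha, ha', mul_sub, sum_sub_distrib]
    ring
  have hactive : ∑ i ∈ univ.filter (fun i => P i = 1), M i j * (x' i - x i) ≤
      ∑ i ∈ univ.filter (fun i => P i = 1), |M i j| * U i :=
    sum_mul_le_sum_abs_mul _ _ _ _ fun i _ => hUb i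
  have hstable : ∑ i ∈ univ.filter (fun i => P i = 0), M i j * (x' i - x i) ≤
      r * ‖∑ i ∈ univ.filter (fun i => P i = 0), M i j • L i‖ := by
    calc ∑ i ∈ univ.filter (fun i => P i = 0), M i j * (x' i - x i)
        = ∑ i ∈ univ.filter (fun i => P i = 0), M i j * inner ℝ (L i) (X' - X) := by
          refine sum_congr rfl fun i hi => ?_
          obtain ⟨hx, hx'⟩ := haff i (mem_filter.1 hi).2
          rw [hx, hx', affine_sub_affine_eq_inner]
      _ ≤ ‖∑ i ∈ univ.filter (fun i => P i = 0), M i j • L i‖ * ‖X' - X‖ :=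
          sum_mul_inner_le_norm_sum_smul_mul_norm _ _ _ _
      _ ≤ r * ‖∑ i ∈ univ.filter (fun i => P i = 0), M i j • L i‖ := by
          rw [mul_comm r]
          exact mul_le_mul_of_nonneg_left hXX' (norm_nonneg _)
  rw [sum_eq_sum_filter_eq_one_add_sum_filter_eq_zero P hP] at hdiff
  linarith

/-- The inactive case of the condition `U(k+1,r)` in the proof of Proposition
4.1: when the center neuron is inactive, the perturbed post-activation is
bounded by the shifted bound computed by Algorithm 1. -/
theorem postactivation_bound_inactive_case
    (m : ℕ) (hm : 1 ≤ m) (r : ℝ) (hr : 0 < r)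
    (X X' : EuclideanSpace ℝ (Fin m)) (hXX' : ‖X' - X‖ ≤ r)
    (x x' : Fin m → ℝ) (M : Matrix (Fin m) (Fin m) ℝ) (c : Fin m → ℝ) (j : Fin m)
    (P : Fin m → ℕ) (hP : ∀ i, P i = 0 ∨ P i = 1)
    (L : Fin m → EuclideanSpace ℝ (Fin m)) (d : Fin m → ℝ)
    (U : Fin m → ℝ) (hU : ∀ i, 0 ≤ U i)
    (a a' : ℝ)
    (ha : a = (∑ i, M i j * x i) + c j)
    (ha' : a' = (∑ i, M i j * x' i) + c j)
    (haff : ∀ i, P i = 0 →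
      x i = (∑ l, L i l * X l) + d i ∧ x' i = (∑ l, L i l * X' l) + d i)
    (hUb : ∀ i, |x' i - x i| ≤ U i)
    (haneg : a < 0) :
    max a' 0 ≤
      max (a + ((∑ i ∈ Finset.univ.filter (fun i => P i = 1), |M i j| * U i) +
        r * ‖∑ i ∈ Finset.univ.filter (fun i => P i = 0), M i j • L i‖)) 0 :=
  postactivation_bound_inactive_case_general m r X X' hXX' x x' M c j P hP L d U a a' ha ha' haff
    hUb
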